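/- Let Ψ: G → K and Δ: K → H be right-resolving graph homomorphisms with Φ = Δ ∘ Ψ, where K = G/∼_Φ and Ψ is the quotient map for the stability relation ∼_Φ (so the fibers of ∂Ψ are exactly the ∼_Φ classes). Then Ψ is synchronizing and the stability relation ∼_Δ is trivial (equality). -/

import Mathlib

/-!
Right-resolvers lift paths uniquely, so the paths of `K` from `Ψ I` are exactly the `Δ`-lifts
of the paths of `H` from `Φ I`, and transitions along them under `Ψ` and under `Φ = Δ ∘ Ψ` agree.
Hence `∼_Φ`, restricted to a `Ψ`-fibre, is contained in `∼_Ψ`: `Ψ` is synchronizing.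
If `K₁ ∼_Δ K₂` with lifts `I₁`, `I₂`, then every word `u` extends to `uv` carrying `I₁` and `I₂`
into a common `Ψ`-fibre, i.e. into one `∼_Φ`-class, which is then synchronized by a further word;
so `I₁ ∼_Φ I₂` and `K₁ = Ψ I₁ = Ψ I₂ = K₂`.
-/

/-- A finite directed multigraph. -/
structure FinGraph where
  V : Type
  E : Type
  [fintV : Fintype V]
  [fintE : Fintype E]
  [decV : DecidableEq V]
  [decE : DecidableEq E]
  src : E → V
  tgt : E → V

attribute [instance] FinGraph.fintV FinGraph.fintE FinGraph.decV FinGraph.decE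

/-- A graph homomorphism. -/
structure GHom (G H : FinGraph) where
  eMap : G.E → H.E
  vMap : G.V → H.V
  src_eq : ∀ e, H.src (eMap e) = vMap (G.src e)
  tgt_eq : ∀ e, H.tgt (eMap e) = vMap (G.tgt e)

def GHom.comp {G K H : FinGraph} (Δ : GHom K H) (Ψ : GHom G K) : GHom G H where
  eMap := Δ.eMap ∘ Ψ.eMap
  vMap := Δ.vMap ∘ Ψ.vMap
  src_eq := fun e => by
    simp only [Function.comp_apply, Δ.src_eq, Ψ.src_eq]
  tgt_eq := fun e => by
    simp only [Function.comp_apply, Δ.tgt_eq, Ψ.tgt_eq]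

/-- The restriction of a homomorphism to the outgoing edges of a state. -/
def outMap {G H : FinGraph} (Φ : GHom G H) (I : G.V) :
    {e : G.E // G.src e = I} → {f : H.E // H.src f = Φ.vMap I} :=
  fun e => ⟨Φ.eMap e.1, (Φ.src_eq e.1).trans (congrArg Φ.vMap e.2)⟩

/-- A right-resolver: a surjective homomorphism restricting to a bijection
on the outgoing edges of each state. -/
def IsRR {G H : FinGraph} (Φ : GHom G H) : Prop :=
  Function.Surjective Φ.vMap ∧ ∀ I : G.V, Function.Bijective (outMap Φ I)

/-- `IsPathFrom H I u`: the edge list `u` is a path in `H` starting at `I`. -/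
def IsPathFrom (H : FinGraph) : H.V → List H.E → Prop
  | _, [] => True
  | I, e :: u => H.src e = I ∧ IsPathFrom H (H.tgt e) u

/-- The terminal state of a path starting at `I`. -/
def pathEnd (H : FinGraph) (I : H.V) (u : List H.E) : H.V :=
  u.foldl (fun _ e => H.tgt e) I

/-- One-step transition: `I · a` is the target of the unique edge at `I`
lifting `a` (when `Φ` is right-resolving and `a` starts at the image of `I`). -/
noncomputable def step {G H : FinGraph} (Φ : GHom G H) (I : G.V) (a : H.E) : G.V :=
  if h : ∃ e : G.E, G.src e = I ∧ Φ.eMap e = a then G.tgt h.choose else I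

/-- Transition along a word: `I · u`. -/
noncomputable def transPath {G H : FinGraph} (Φ : GHom G H) (I : G.V) (u : List H.E) : G.V :=
  u.foldl (step Φ) I

/-- The stability relation of a right-resolver. -/
def Stable {G H : FinGraph} (Φ : GHom G H) (I₁ I₂ : G.V) : Prop :=
  Φ.vMap I₁ = Φ.vMap I₂ ∧
  ∀ u : List H.E, IsPathFrom H (Φ.vMap I₁) u →
    ∃ v : List H.E, IsPathFrom H (pathEnd H (Φ.vMap I₁) u) v ∧
      transPath Φ I₁ (u ++ v) = transPath Φ I₂ (u ++ v)

/-- A right-resolver is synchronizing if each fiber of its state map is a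
single stability class. -/
def Synchronizing {G H : FinGraph} (Φ : GHom G H) : Prop :=
  ∀ I₁ I₂ : G.V, Φ.vMap I₁ = Φ.vMap I₂ → Stable Φ I₁ I₂

/-- The fiber of the state map over a state of the codomain. -/
def fiber {G H : FinGraph} (Φ : GHom G H) (I : H.V) : Set G.V := {J | Φ.vMap J = I}

/-- The image `U · u` of a set of states under transition along a word. -/
noncomputable def setTrans {G H : FinGraph} (Φ : GHom G H) (U : Set G.V)
    (u : List H.E) : Set G.V :=
  (fun J => transPath Φ J u) '' U

/-- A minimal image of a right-resolver. -/
def IsMinImage {G H : FinGraph} (Φ : GHom G H) (U : Set G.V) : Prop :=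
  ∃ (I : H.V) (u : List H.E), IsPathFrom H I u ∧ U = setTrans Φ (fiber Φ I) u ∧
    ∀ v : List H.E, IsPathFrom H (pathEnd H I u) v →
      (setTrans Φ U v).ncard = U.ncard

/-- Strong connectedness: a directed path between every ordered pair of states. -/
def StronglyConnected (G : FinGraph) : Prop :=
  ∀ I J : G.V, ∃ u : List G.E, IsPathFrom G I u ∧ pathEnd G I u = J

lemma pathEnd_append (H : FinGraph) (I : H.V) (u v : List H.E) :
    pathEnd H I (u ++ v) = pathEnd H (pathEnd H I u) v :=
  List.foldl_append

lemma isPathFrom_append (H : FinGraph) (u : List H.E) (I : H.V) (v : List H.E) :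
    IsPathFrom H I (u ++ v) ↔ IsPathFrom H I u ∧ IsPathFrom H (pathEnd H I u) v := by
  induction u generalizing I with
  | nil => simp [IsPathFrom, pathEnd]
  | cons e u ih =>
      show (H.src e = I ∧ IsPathFrom H (H.tgt e) (u ++ v)) ↔ (H.src e = I ∧ _) ∧ _
      rw [ih, and_assoc]
      rfl

section Paths

variable {G H : FinGraph}

lemma transPath_append (Φ : GHom G H) (I : G.V) (u v : List H.E) :
    transPath Φ I (u ++ v) = transPath Φ (transPath Φ I u) v :=
  List.foldl_append

lemma isPathFrom_map (Φ : GHom G H) (p : List G.E) (I : G.V) (hp : IsPathFrom G I p) :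
    IsPathFrom H (Φ.vMap I) (p.map Φ.eMap) := by
  induction p generalizing I with
  | nil => trivial
  | cons e p ih =>
      obtain ⟨he, hp⟩ := hp
      refine ⟨by rw [Φ.src_eq, he], ?_⟩
      show IsPathFrom H (H.tgt (Φ.eMap e)) (p.map Φ.eMap)
      rw [Φ.tgt_eq]
      exact ih _ hp

lemma pathEnd_map (Φ : GHom G H) (p : List G.E) (I : G.V) :
    pathEnd H (Φ.vMap I) (p.map Φ.eMap) = Φ.vMap (pathEnd G I p) := by
  induction p generalizing I with
  | nil => rfl
  | cons e p ih =>
      show pathEnd H (H.tgt (Φ.eMap e)) (p.map Φ.eMap) = Φ.vMap (pathEnd G (G.tgt e) p)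
      rw [Φ.tgt_eq]
      exact ih _

end Paths

section RightResolving

variable {G H : FinGraph} {Φ : GHom G H}

lemma exists_lift_of_surjective (hΦ : ∀ I, Function.Surjective (outMap Φ I))
    {I : G.V} {a : H.E} (ha : H.src a = Φ.vMap I) :
    ∃ e, G.src e = I ∧ Φ.eMap e = a := by
  obtain ⟨⟨e, he⟩, h⟩ := hΦ I ⟨a, ha⟩
  exact ⟨e, he, congrArg Subtype.val h⟩

lemma step_eq_tgt_of_injective (hΦ : ∀ I, Function.Injective (outMap Φ I))
    {I : G.V} {e : G.E} (he : G.src e = I) :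
    step Φ I (Φ.eMap e) = G.tgt e := by
  have hex : ∃ e', G.src e' = I ∧ Φ.eMap e' = Φ.eMap e := ⟨e, he, rfl⟩
  obtain ⟨hsrc, heq⟩ := hex.choose_spec
  rw [step, dif_pos hex]
  have : (⟨hex.choose, hsrc⟩ : {e' : G.E // G.src e' = I}) = ⟨e, he⟩ :=
    hΦ I (Subtype.ext heq)
  exact congrArg (G.tgt ∘ Subtype.val) this

lemma exists_path_lift (hΦ : ∀ I, Function.Surjective (outMap Φ I))
    (u : List H.E) (I : G.V) (hu : IsPathFrom H (Φ.vMap I) u) :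
    ∃ p, IsPathFrom G I p ∧ p.map Φ.eMap = u := by
  induction u generalizing I with
  | nil => exact ⟨[], trivial, rfl⟩
  | cons a u ih =>
      obtain ⟨ha, hu⟩ := hu
      obtain ⟨e, he, rfl⟩ := exists_lift_of_surjective hΦ ha
      rw [Φ.tgt_eq] at hu
      obtain ⟨p, hp, rfl⟩ := ih (G.tgt e) hu
      exact ⟨e :: p, ⟨he, hp⟩, rfl⟩

lemma transPath_map_eMap (hΦ : ∀ I, Function.Injective (outMap Φ I))
    (p : List G.E) (I : G.V) (hp : IsPathFrom G I p) :
    transPath Φ I (p.map Φ.eMap) = pathEnd G I p := by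
  induction p generalizing I with
  | nil => rfl
  | cons e p ih =>
      obtain ⟨he, hp⟩ := hp
      show transPath Φ (step Φ I (Φ.eMap e)) (p.map Φ.eMap) = pathEnd G (G.tgt e) p
      rw [step_eq_tgt_of_injective hΦ he]
      exact ih _ hp

lemma vMap_transPath (hΦ : ∀ I, Function.Bijective (outMap Φ I))
    (u : List H.E) (I : G.V) (hu : IsPathFrom H (Φ.vMap I) u) :
    Φ.vMap (transPath Φ I u) = pathEnd H (Φ.vMap I) u := by
  obtain ⟨p, hp, rfl⟩ := exists_path_lift (fun I => (hΦ I).2) u I hu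
  rw [transPath_map_eMap (fun I => (hΦ I).1) p I hp, pathEnd_map]

lemma Stable.exists_sync {I₁ I₂ : G.V} (h : Stable Φ I₁ I₂) :
    ∃ v, IsPathFrom H (Φ.vMap I₁) v ∧ transPath Φ I₁ v = transPath Φ I₂ v :=
  h.2 [] trivial

lemma stable_of_forall_exists_stable (hΦ : ∀ I, Function.Bijective (outMap Φ I))
    {I₁ I₂ : G.V} (hI : Φ.vMap I₁ = Φ.vMap I₂)
    (h : ∀ u, IsPathFrom H (Φ.vMap I₁) u → ∃ v, IsPathFrom H (pathEnd H (Φ.vMap I₁) u) v ∧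
      Stable Φ (transPath Φ I₁ (u ++ v)) (transPath Φ I₂ (u ++ v))) :
    Stable Φ I₁ I₂ := by
  refine ⟨hI, fun u hu => ?_⟩
  obtain ⟨v, hv, hstable⟩ := h u hu
  obtain ⟨w, hw, hsync⟩ := hstable.exists_sync
  have huv : IsPathFrom H (Φ.vMap I₁) (u ++ v) := (isPathFrom_append H u _ v).2 ⟨hu, hv⟩
  refine ⟨v ++ w, (isPathFrom_append H v _ w).2 ⟨hv, ?_⟩, ?_⟩
  · rwa [← pathEnd_append, ← vMap_transPath hΦ _ _ huv]
  · simpa only [← List.append_assoc, transPath_append] using hsync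

end RightResolving

section Composition

variable {G K H : FinGraph} {Ψ : GHom G K} {Δ : GHom K H}

@[simp]
lemma GHom.comp_vMap (I : G.V) : (Δ.comp Ψ).vMap I = Δ.vMap (Ψ.vMap I) := rfl

variable (hΨ : ∀ I, Function.Bijective (outMap Ψ I)) (hΔ : ∀ J, Function.Bijective (outMap Δ J))
include hΨ hΔ

lemma bijective_outMap_comp (I : G.V) : Function.Bijective (outMap (Δ.comp Ψ) I) :=
  (hΔ _).comp (hΨ I)

lemma transPath_comp (w : List K.E) (I : G.V) (hw : IsPathFrom K (Ψ.vMap I) w) :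
    transPath Ψ I w = transPath (Δ.comp Ψ) I (w.map Δ.eMap) := by
  obtain ⟨p, hp, rfl⟩ := exists_path_lift (fun I => (hΨ I).2) w I hw
  rw [List.map_map, transPath_map_eMap (fun I => (hΨ I).1) p I hp]
  exact (transPath_map_eMap (fun I => (bijective_outMap_comp hΨ hΔ I).1) p I hp).symm

lemma vMap_transPath_comp (u : List H.E) (I : G.V) (hu : IsPathFrom H (Δ.vMap (Ψ.vMap I)) u) :
    Ψ.vMap (transPath (Δ.comp Ψ) I u) = transPath Δ (Ψ.vMap I) u := by
  obtain ⟨p, hp, rfl⟩ := exists_path_lift (fun I => (bijective_outMap_comp hΨ hΔ I).2) u I hu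
  rw [transPath_map_eMap (fun I => (bijective_outMap_comp hΨ hΔ I).1) p I hp, ← pathEnd_map,
    show p.map (Δ.comp Ψ).eMap = (p.map Ψ.eMap).map Δ.eMap by rw [List.map_map]; rfl,
    transPath_map_eMap (fun J => (hΔ J).1) _ _ (isPathFrom_map Ψ p I hp)]

lemma Stable.of_comp {I₁ I₂ : G.V} (hI : Ψ.vMap I₁ = Ψ.vMap I₂)
    (h : Stable (Δ.comp Ψ) I₁ I₂) : Stable Ψ I₁ I₂ := by
  refine ⟨hI, fun w hw => ?_⟩
  obtain ⟨v, hv, hsync⟩ := h.2 (w.map Δ.eMap) (isPathFrom_map Δ w _ hw)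
  rw [GHom.comp_vMap, pathEnd_map] at hv
  obtain ⟨w', hw', rfl⟩ := exists_path_lift (fun J => (hΔ J).2) v _ hv
  have hww' : IsPathFrom K (Ψ.vMap I₁) (w ++ w') := (isPathFrom_append K w _ w').2 ⟨hw, hw'⟩
  refine ⟨w', hw', ?_⟩
  rw [transPath_comp hΨ hΔ _ _ hww', transPath_comp hΨ hΔ _ _ (hI ▸ hww'), List.map_append]
  exact hsync

end Composition

/-- if the fibers of Ψ are exactly the stability classes of
Φ = Δ ∘ Ψ (i.e. Ψ is the quotient map by ∼_Φ), then Ψ is synchronizing and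
the stability relation of Δ is trivial. -/
theorem quotient_sync_and_triv {G K H : FinGraph} (Ψ : GHom G K) (Δ : GHom K H)
    (hΨ : IsRR Ψ) (hΔ : IsRR Δ)
    (hquot : ∀ I₁ I₂ : G.V, Ψ.vMap I₁ = Ψ.vMap I₂ ↔ Stable (Δ.comp Ψ) I₁ I₂) :
    Synchronizing Ψ ∧ ∀ K₁ K₂ : K.V, Stable Δ K₁ K₂ → K₁ = K₂ := by
  refine ⟨fun I₁ I₂ hI => ((hquot I₁ I₂).1 hI).of_comp hΨ.2 hΔ.2 hI, fun K₁ K₂ hK => ?_⟩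
  obtain ⟨I₁, rfl⟩ := hΨ.1 K₁
  obtain ⟨I₂, rfl⟩ := hΨ.1 K₂
  refine (hquot I₁ I₂).2 (stable_of_forall_exists_stable (bijective_outMap_comp hΨ.2 hΔ.2) hK.1
    fun u hu => ?_)
  obtain ⟨v, hv, hsync⟩ := hK.2 u hu
  have huv : IsPathFrom H (Δ.vMap (Ψ.vMap I₁)) (u ++ v) := (isPathFrom_append H u _ v).2 ⟨hu, hv⟩
  refine ⟨v, hv, (hquot _ _).1 ?_⟩
  rw [vMap_transPath_comp hΨ.2 hΔ.2 _ _ huv, vMap_transPath_comp hΨ.2 hΔ.2 _ _ (hK.1 ▸ huv)]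
  exact hsync
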